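/- arXiv:1407.5427 — 4 statements merged into one kernel-verified Lean document; each statement's English description precedes it below -/
import Mathlib

section
/- Let n, m, p be positive integers and let all norms be Euclidean. Let z̄ₖ, z̄ₖ₊₁, z*ₖ, z*ₖ₊₁, z∞ ∈ ℝⁿ, μ̄ₖ, μ*ₖ, μ*ₖ₊₁ ∈ ℝᵐ, sₖ, sₖ₊₁ ∈ ℝᵖ, let g : ℝⁿ → ℝᵐ, and let ρ, C, λ_g, λ_A, λ_F, λ_B, λ_G, q_B, r_B, δ be positive reals, M ≥ 1 a real, and θ̂ ∈ (1/2, 1). Set w̄ₖ := (z̄ₖ, μ̄ₖ), w*ₖ := (z*ₖ, μ*ₖ), w*ₖ₊₁ := (z*ₖ₊₁, μ*ₖ₊₁), w∞ := (z∞, μ̄ₖ + ρ·g(z∞)), w̄ₖ₊₁ := (z̄ₖ₊₁, μ̄ₖ + ρ·g(z̄ₖ₊₁)), d̄ := (μ̄ₖ − μ*ₖ)/ρ and d* := (μ*ₖ₊₁ − μ*ₖ)/ρ. Assume: (h1) there exists a map w* : ℝᵐ × ℝᵖ → ℝⁿ × ℝᵐ with w*(0, sₖ) = w*ₖ, w*(d*,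 sₖ₊₁) = w*ₖ₊₁, w*(d̄, sₖ₊₁) = w∞, and ‖w*(d, s) − w*(d′, s′)‖ ≤ λ_B·λ_G·√(‖d − d′‖² + ‖s − s′‖²) for all d, d′ with ‖d‖ < q_B, ‖d′‖ < q_B and all s, s′ with ‖s − sₖ‖ < r_B, ‖s′ − sₖ‖ < r_B; (h2) ‖μ*ₖ₊₁ − μ*ₖ‖ ≤ λ_A·λ_F·‖sₖ₊₁ − sₖ‖; (h3) if ‖z̄ₖ − z∞‖ < δ then ‖z̄ₖ₊₁ − z∞‖ ≤ C·M^(−ψ(θ̂))·‖z̄ₖ − z∞‖; (h4) ‖g(z̄ₖ₊₁) − g(z∞)‖ ≤ λ_g·‖z̄ₖ₊₁ − z∞‖. Further assume ‖sₖ₊₁ − sₖ‖ < min{r_B, q_B·ρ/(λ_A·λ_F)}, ‖w̄ₖ − w*ₖ‖ < q_B·ρ, and (1 + λ_G·λ_B/ρ)·‖w̄ₖ − w*ₖ‖ + λ_G·λ_B·‖sₖ₊₁ − sₖ‖ < δ. Then ‖w̄ₖ₊₁ − w*ₖ₊₁‖ ≤ β_w·‖w̄ₖ − w*ₖ‖ +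 β_s·‖sₖ₊₁ − sₖ‖, where β_w := C·(1 + ρ·λ_g)·(1 + λ_B·λ_G/ρ)·M^(−ψ(θ̂)) + λ_B·λ_G/ρ and β_s := C·(1 + ρ·λ_g)·λ_B·λ_G·M^(−ψ(θ̂)) + λ_B·λ_G·λ_A·λ_F/ρ. -/
/-! Both iterates are compared with the limit point `w∞ = w*(d̄, sₖ₊₁)` of the inner scheme.
Since the solution map `w*` is Lipschitz, `w∞` lies within `O(‖w̄ₖ - w*ₖ‖ + ‖sₖ₊₁ - sₖ‖)` of
both `w*ₖ` and `w*ₖ₊₁`. In particular `z̄ₖ` is `δ`-close to `z∞`, so the `M` inner steps contract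
`‖z̄ - z∞‖` by `C M^(-ψ)`, and the multiplier update `μ̄ₖ + ρ g(·)` inflates this by at most
`1 + ρ λ_g`. The triangle inequality through `w∞` then gives the estimate. The pair norm
`√(‖z‖² + ‖μ‖²)` is the norm of `WithLp 2 (E × F)`, which supplies the triangle inequality. -/

open Real WithLp

section PairNorm

variable {E F : Type*} [SeminormedAddCommGroup E] [SeminormedAddCommGroup F]

theorem sqrt_norm_sq_add_norm_sq_eq_norm_toLp (x : E) (y : F) :
    √(‖x‖ ^ 2 + ‖y‖ ^ 2) = ‖toLp 2 (x, y)‖ := by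
  rw [prod_norm_eq_of_L2, toLp_fst, toLp_snd]

theorem norm_toLp_le_norm_add_norm {p : ENNReal} [Fact (1 ≤ p)] (x : E) (y : F) :
    ‖toLp p (x, y)‖ ≤ ‖x‖ + ‖y‖ :=
  calc ‖toLp p (x, y)‖ = ‖toLp p (x, (0 : F)) + toLp p ((0 : E), y)‖ := by simp [← toLp_add]
    _ ≤ ‖x‖ + ‖y‖ := (norm_add_le _ _).trans_eq (by simp)

theorem norm_fst_sub_fst_le {p : ENNReal} [Fact (1 ≤ p)] (x y a : WithLp p (E × F)) :
    ‖x.fst - y.fst‖ ≤ ‖x - a‖ + ‖y - a‖ :=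
  (WithLp.norm_fst_le _ (x - y)).trans <| by
    simpa only [dist_eq_norm] using dist_triangle_right x y a

end PairNorm

section Scaling

variable {E : Type*} [SeminormedAddCommGroup E] [NormedSpace ℝ E] {ρ : ℝ}

theorem norm_inv_smul_of_pos (hρ : 0 < ρ) (x : E) : ‖ρ⁻¹ • x‖ = ‖x‖ / ρ := by
  rw [norm_smul, norm_inv, norm_of_nonneg hρ.le, inv_mul_eq_div]

theorem norm_inv_smul_lt_of_lt {q : ℝ} (hρ : 0 < ρ) {x : E} (hx : ‖x‖ < q * ρ) :
    ‖ρ⁻¹ • x‖ < q := by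
  rwa [norm_inv_smul_of_pos hρ, div_lt_iff₀ hρ]

end Scaling

theorem norm_toLp_sub_multiplier_update_le {E F : Type*} [SeminormedAddCommGroup E]
    [SeminormedAddCommGroup F] [NormedSpace ℝ F] {ρ lg : ℝ} (hρ : 0 ≤ ρ) (g : E → F) (μ : F)
    {z z' : E} (hg : ‖g z - g z'‖ ≤ lg * ‖z - z'‖) :
    ‖toLp 2 (z, μ + ρ • g z) - toLp 2 (z', μ + ρ • g z')‖ ≤ (1 + ρ * lg) * ‖z - z'‖ := by
  rw [← toLp_sub, Prod.mk_sub_mk, add_sub_add_left_eq_sub, ← smul_sub]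
  calc _ ≤ ‖z - z'‖ + ‖ρ • (g z - g z')‖ := norm_toLp_le_norm_add_norm _ _
    _ ≤ ‖z - z'‖ + ρ * (lg * ‖z - z'‖) := by rw [norm_smul, norm_of_nonneg hρ]; gcongr
    _ = (1 + ρ * lg) * ‖z - z'‖ := by ring

section SolutionMap

variable {D P E F : Type*} [SeminormedAddCommGroup D] [NormedSpace ℝ D] [SeminormedAddCommGroup P]
  [SeminormedAddCommGroup E] [SeminormedAddCommGroup F] {w : D × P → E × F} {L ρ q r : ℝ} {s₀ : P}

theorem norm_toLp_apply_inv_smul_sub_apply_zero_le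
    (hw : ∀ d d' s s', ‖d‖ < q → ‖d'‖ < q → ‖s - s₀‖ < r → ‖s' - s₀‖ < r →
      ‖toLp 2 (w (d, s)) - toLp 2 (w (d', s'))‖ ≤ L * ‖toLp 2 (d, s) - toLp 2 (d', s')‖)
    (hL : 0 ≤ L) (hρ : 0 < ρ) (hq : 0 < q) (hr : 0 < r) {μ μ₀ : D} {s : P}
    (hμ : ‖μ - μ₀‖ < q * ρ) (hs : ‖s - s₀‖ < r) :
    ‖toLp 2 (w (ρ⁻¹ • (μ - μ₀), s)) - toLp 2 (w (0, s₀))‖ ≤ L * (‖μ - μ₀‖ / ρ + ‖s - s₀‖) := by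
  refine (hw _ 0 s s₀ (norm_inv_smul_lt_of_lt hρ hμ) (by rwa [norm_zero]) hs
    (by rwa [sub_self, norm_zero])).trans ?_
  rw [← toLp_sub, Prod.mk_sub_mk, sub_zero, ← norm_inv_smul_of_pos hρ]
  gcongr
  exact norm_toLp_le_norm_add_norm _ _

theorem norm_toLp_apply_inv_smul_sub_apply_inv_smul_le
    (hw : ∀ d d' s s', ‖d‖ < q → ‖d'‖ < q → ‖s - s₀‖ < r → ‖s' - s₀‖ < r →
      ‖toLp 2 (w (d, s)) - toLp 2 (w (d', s'))‖ ≤ L * ‖toLp 2 (d, s) - toLp 2 (d', s')‖)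
    (hρ : 0 < ρ) {μ μ' μ₀ : D} {s : P} (hμ : ‖μ - μ₀‖ < q * ρ) (hμ' : ‖μ' - μ₀‖ < q * ρ)
    (hs : ‖s - s₀‖ < r) :
    ‖toLp 2 (w (ρ⁻¹ • (μ - μ₀), s)) - toLp 2 (w (ρ⁻¹ • (μ' - μ₀), s))‖ ≤ L * (‖μ - μ'‖ / ρ) := by
  simpa [← toLp_sub, ← smul_sub, norm_inv_smul_of_pos hρ] using
    hw _ _ s s (norm_inv_smul_lt_of_lt hρ hμ) (norm_inv_smul_lt_of_lt hρ hμ') hs hs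

end SolutionMap

theorem contraction_estimate_general
    (n m p : ℕ)
    (zbk zbk1 zsk zsk1 zinf : EuclideanSpace ℝ (Fin n))
    (μbk μsk μsk1 : EuclideanSpace ℝ (Fin m))
    (sk sk1 : EuclideanSpace ℝ (Fin p))
    (g : EuclideanSpace ℝ (Fin n) → EuclideanSpace ℝ (Fin m))
    (ρ C lg lA lF lB lG qB rB δ M θhat : ℝ)
    (hρ : 0 < ρ) (hC : 0 < C) (hlg : 0 < lg) (hlA : 0 < lA) (hlF : 0 < lF)
    (hlB : 0 < lB) (hlG : 0 < lG) (hqB : 0 < qB) (hrB : 0 < rB)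
    (hM : 1 ≤ M)
    (h1 : ∃ w : EuclideanSpace ℝ (Fin m) × EuclideanSpace ℝ (Fin p) →
            EuclideanSpace ℝ (Fin n) × EuclideanSpace ℝ (Fin m),
        w (0, sk) = (zsk, μsk) ∧
        w (ρ⁻¹ • (μsk1 - μsk), sk1) = (zsk1, μsk1) ∧
        w (ρ⁻¹ • (μbk - μsk), sk1) = (zinf, μbk + ρ • g zinf) ∧
        ∀ d d' : EuclideanSpace ℝ (Fin m), ∀ s s' : EuclideanSpace ℝ (Fin p),
          ‖d‖ < qB → ‖d'‖ < qB → ‖s - sk‖ < rB → ‖s' - sk‖ < rB →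
          Real.sqrt (‖(w (d, s)).1 - (w (d', s')).1‖ ^ 2 +
              ‖(w (d, s)).2 - (w (d', s')).2‖ ^ 2)
            ≤ lB * lG * Real.sqrt (‖d - d'‖ ^ 2 + ‖s - s'‖ ^ 2))
    (h2 : ‖μsk1 - μsk‖ ≤ lA * lF * ‖sk1 - sk‖)
    (h3 : ‖zbk - zinf‖ < δ →
        ‖zbk1 - zinf‖ ≤ C * M ^ (-((1 - θhat) / (2 * θhat - 1))) * ‖zbk - zinf‖)
    (h4 : ‖g zbk1 - g zinf‖ ≤ lg * ‖zbk1 - zinf‖)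
    (hs : ‖sk1 - sk‖ < min rB (qB * ρ / (lA * lF)))
    (hw : Real.sqrt (‖zbk - zsk‖ ^ 2 + ‖μbk - μsk‖ ^ 2) < qB * ρ)
    (hδball : (1 + lG * lB / ρ) * Real.sqrt (‖zbk - zsk‖ ^ 2 + ‖μbk - μsk‖ ^ 2)
        + lG * lB * ‖sk1 - sk‖ < δ) :
    Real.sqrt (‖zbk1 - zsk1‖ ^ 2 + ‖(μbk + ρ • g zbk1) - μsk1‖ ^ 2)
      ≤ (C * (1 + ρ * lg) * (1 + lB * lG / ρ) * M ^ (-((1 - θhat) / (2 * θhat - 1)))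
            + lB * lG / ρ) *
          Real.sqrt (‖zbk - zsk‖ ^ 2 + ‖μbk - μsk‖ ^ 2)
        + (C * (1 + ρ * lg) * lB * lG * M ^ (-((1 - θhat) / (2 * θhat - 1)))
            + lB * lG * lA * lF / ρ) * ‖sk1 - sk‖ := by
  obtain ⟨w, hw0, hw1, hwinf, hlip⟩ := h1
  rw [mul_comm lG lB] at hδball
  set L := lB * lG
  set K := C * M ^ (-((1 - θhat) / (2 * θhat - 1)))
  set S := ‖sk1 - sk‖
  simp only [sqrt_norm_sq_add_norm_sq_eq_norm_toLp, ← Prod.mk_sub_mk, Prod.mk.eta, toLp_sub]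
    at hlip hw hδball ⊢
  set W := ‖toLp 2 (zbk, μbk) - toLp 2 (zsk, μsk)‖
  set winf := toLp 2 (zinf, μbk + ρ • g zinf)
  have hK : 0 ≤ K := by have := zero_lt_one.trans_le hM; positivity
  have hSr : S < rB := hs.trans_le (min_le_left _ _)
  have hbW : ‖μbk - μsk‖ ≤ W := WithLp.norm_snd_le _ (toLp 2 (zbk, μbk) - toLp 2 (zsk, μsk))
  have hμk1 : ‖μsk1 - μsk‖ < qB * ρ :=
    h2.trans_lt <| (lt_div_iff₀' (by positivity)).1 (hs.trans_le (min_le_right _ _))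
  have hinf_k : ‖winf - toLp 2 (zsk, μsk)‖ ≤ L * (W / ρ + S) := by
    have := norm_toLp_apply_inv_smul_sub_apply_zero_le hlip (by positivity) hρ hqB hrB
      (hbW.trans_lt hw) hSr
    rw [hwinf, hw0] at this
    exact this.trans (by gcongr)
  have hμ : ‖μbk - μsk1‖ ≤ W + lA * lF * S := by
    refine (le_of_eq_of_le ?_ (dist_triangle_right μbk μsk1 μsk)).trans (add_le_add hbW h2)
    simp only [dist_eq_norm]
  have hinf_k1 : ‖winf - toLp 2 (zsk1, μsk1)‖ ≤ L * ((W + lA * lF * S) / ρ) := by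
    have := norm_toLp_apply_inv_smul_sub_apply_inv_smul_le hlip hρ (hbW.trans_lt hw) hμk1 hSr
    rw [hwinf, hw1] at this
    exact this.trans (by gcongr)
  have hzk : ‖zbk - zinf‖ ≤ W + L * (W / ρ + S) :=
    (norm_fst_sub_fst_le (toLp 2 (zbk, μbk)) winf (toLp 2 (zsk, μsk))).trans
      (add_le_add le_rfl hinf_k)
  calc ‖toLp 2 (zbk1, μbk + ρ • g zbk1) - toLp 2 (zsk1, μsk1)‖
      ≤ ‖toLp 2 (zbk1, μbk + ρ • g zbk1) - winf‖ + ‖winf - toLp 2 (zsk1, μsk1)‖ :=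
        norm_sub_le_norm_sub_add_norm_sub ..
    _ ≤ (1 + ρ * lg) * (K * (W + L * (W / ρ + S))) + L * ((W + lA * lF * S) / ρ) := by
        refine add_le_add ((norm_toLp_sub_multiplier_update_le hρ.le g μbk h4).trans ?_) hinf_k1
        gcongr
        exact (h3 ((hzk.trans_eq (by ring)).trans_lt hδball)).trans (by gcongr)
    _ = _ := by ring

theorem contraction_estimate
    (n m p : ℕ) (hn : 0 < n) (hm : 0 < m) (hp : 0 < p)
    (zbk zbk1 zsk zsk1 zinf : EuclideanSpace ℝ (Fin n))
    (μbk μsk μsk1 : EuclideanSpace ℝ (Fin m))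
    (sk sk1 : EuclideanSpace ℝ (Fin p))
    (g : EuclideanSpace ℝ (Fin n) → EuclideanSpace ℝ (Fin m))
    (ρ C lg lA lF lB lG qB rB δ M θhat : ℝ)
    (hρ : 0 < ρ) (hC : 0 < C) (hlg : 0 < lg) (hlA : 0 < lA) (hlF : 0 < lF)
    (hlB : 0 < lB) (hlG : 0 < lG) (hqB : 0 < qB) (hrB : 0 < rB) (hδ : 0 < δ)
    (hM : 1 ≤ M) (hθ1 : 1 / 2 < θhat) (hθ2 : θhat < 1)
    (h1 : ∃ w : EuclideanSpace ℝ (Fin m) × EuclideanSpace ℝ (Fin p) →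
            EuclideanSpace ℝ (Fin n) × EuclideanSpace ℝ (Fin m),
        w (0, sk) = (zsk, μsk) ∧
        w (ρ⁻¹ • (μsk1 - μsk), sk1) = (zsk1, μsk1) ∧
        w (ρ⁻¹ • (μbk - μsk), sk1) = (zinf, μbk + ρ • g zinf) ∧
        ∀ d d' : EuclideanSpace ℝ (Fin m), ∀ s s' : EuclideanSpace ℝ (Fin p),
          ‖d‖ < qB → ‖d'‖ < qB → ‖s - sk‖ < rB → ‖s' - sk‖ < rB →
          Real.sqrt (‖(w (d, s)).1 - (w (d', s')).1‖ ^ 2 +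
              ‖(w (d, s)).2 - (w (d', s')).2‖ ^ 2)
            ≤ lB * lG * Real.sqrt (‖d - d'‖ ^ 2 + ‖s - s'‖ ^ 2))
    (h2 : ‖μsk1 - μsk‖ ≤ lA * lF * ‖sk1 - sk‖)
    (h3 : ‖zbk - zinf‖ < δ →
        ‖zbk1 - zinf‖ ≤ C * M ^ (-((1 - θhat) / (2 * θhat - 1))) * ‖zbk - zinf‖)
    (h4 : ‖g zbk1 - g zinf‖ ≤ lg * ‖zbk1 - zinf‖)
    (hs : ‖sk1 - sk‖ < min rB (qB * ρ / (lA * lF)))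
    (hw : Real.sqrt (‖zbk - zsk‖ ^ 2 + ‖μbk - μsk‖ ^ 2) < qB * ρ)
    (hδball : (1 + lG * lB / ρ) * Real.sqrt (‖zbk - zsk‖ ^ 2 + ‖μbk - μsk‖ ^ 2)
        + lG * lB * ‖sk1 - sk‖ < δ) :
    Real.sqrt (‖zbk1 - zsk1‖ ^ 2 + ‖(μbk + ρ • g zbk1) - μsk1‖ ^ 2)
      ≤ (C * (1 + ρ * lg) * (1 + lB * lG / ρ) * M ^ (-((1 - θhat) / (2 * θhat - 1)))
            + lB * lG / ρ) *
          Real.sqrt (‖zbk - zsk‖ ^ 2 + ‖μbk - μsk‖ ^ 2)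
        + (C * (1 + ρ * lg) * lB * lG * M ^ (-((1 - θhat) / (2 * θhat - 1)))
            + lB * lG * lA * lF / ρ) * ‖sk1 - sk‖ :=
  contraction_estimate_general n m p zbk zbk1 zsk zsk1 zinf μbk μsk μsk1 sk sk1 g ρ C lg lA lF lB lG
    qB rB δ M θhat hρ hC hlg hlA hlF hlB hlG hqB hrB hM h1 h2 h3 h4 hs hw hδball
end

section
/- Let m, p be positive integers, all norms Euclidean. Let μ̄ₖ, μ*ₖ, μ*ₖ₊₁ ∈ ℝᵐ, sₖ, sₖ₊₁ ∈ ℝᵖ, let w̄ₖ, w*ₖ, w*ₖ₊₁, w∞ be points of ℝⁿ × ℝᵐ with w̄ₖ = (z̄ₖ, μ̄ₖ) and w*ₖ = (z*ₖ, μ*ₖ), and let ρ, λ_A, λ_F, λ_B, λ_G, q_B, r_B be positive reals. Set d̄ := (μ̄ₖ − μ*ₖ)/ρ and d* := (μ*ₖ₊₁ − μ*ₖ)/ρ. Assume: (h1) there exists a map w* : ℝᵐ × ℝᵖ → ℝⁿ × ℝᵐ with w*(d*, sₖ₊₁) = w*ₖ₊₁ and w*(d̄, sₖ₊₁) = w∞,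 and ‖w*(d, s) − w*(d′, s′)‖ ≤ λ_B·λ_G·√(‖d − d′‖² + ‖s − s′‖²) for all d, d′ with ‖d‖ < q_B, ‖d′‖ < q_B and all s, s′ with ‖s − sₖ‖ < r_B, ‖s′ − sₖ‖ < r_B; (h2) ‖μ*ₖ₊₁ − μ*ₖ‖ ≤ λ_A·λ_F·‖sₖ₊₁ − sₖ‖. If ‖sₖ₊₁ − sₖ‖ < min{r_B, q_B·ρ/(λ_A·λ_F)} and ‖w̄ₖ − w*ₖ‖ < q_B·ρ, then ‖w∞ − w*ₖ₊₁‖ ≤ (λ_B·λ_G/ρ)·(‖w̄ₖ − w*ₖ‖ + λ_A·λ_F·‖sₖ₊₁ − sₖ‖). -/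
/-!
Both `w∞` and `w*ₖ₊₁` are values of the Lipschitz map `w*` at the same second argument
`sₖ₊₁`, so their distance is at most `λ_B λ_G ‖d̄ - d*‖ = (λ_B λ_G / ρ) ‖μ̄ₖ - μ*ₖ₊₁‖`.
Splitting `μ̄ₖ - μ*ₖ₊₁` through `μ*ₖ` bounds this by `‖w̄ₖ - w*ₖ‖ + λ_A λ_F ‖sₖ₊₁ - sₖ‖`.
-/

theorem Real.le_sqrt_sq_add_sq_right (x y : ℝ) : y ≤ √(x ^ 2 + y ^ 2) :=
  Real.le_sqrt_of_sq_le (le_add_of_nonneg_left (sq_nonneg x))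

section

variable {E : Type*} [SeminormedAddCommGroup E] [NormedSpace ℝ E]

theorem norm_inv_smul_lt_of_lt_mul {ρ q : ℝ} {x : E} (hρ : 0 < ρ) (h : ‖x‖ < q * ρ) :
    ‖ρ⁻¹ • x‖ < q := by
  rwa [norm_smul, norm_inv, Real.norm_of_nonneg hρ.le, inv_mul_lt_iff₀ hρ, mul_comm]

theorem norm_inv_smul_sub_sub_inv_smul_sub (ρ : ℝ) (a b c : E) :
    ‖ρ⁻¹ • (a - c) - ρ⁻¹ • (b - c)‖ = ‖a - b‖ / |ρ| := by
  rw [← smul_sub, sub_sub_sub_cancel_right, norm_smul, norm_inv, Real.norm_eq_abs,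
    inv_mul_eq_div]

end

theorem bound_winf_to_wstar_general
    (n m p : ℕ)
    (zbk zsk : EuclideanSpace ℝ (Fin n))
    (μbk μsk μsk1 : EuclideanSpace ℝ (Fin m))
    (sk sk1 : EuclideanSpace ℝ (Fin p))
    (winf wsk1 : EuclideanSpace ℝ (Fin n) × EuclideanSpace ℝ (Fin m))
    (ρ lA lF lB lG qB rB : ℝ)
    (hρ : 0 < ρ) (hlA : 0 < lA) (hlF : 0 < lF) (hlB : 0 < lB) (hlG : 0 < lG)
    (h1 : ∃ w : EuclideanSpace ℝ (Fin m) × EuclideanSpace ℝ (Fin p) →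
            EuclideanSpace ℝ (Fin n) × EuclideanSpace ℝ (Fin m),
        w (ρ⁻¹ • (μsk1 - μsk), sk1) = wsk1 ∧
        w (ρ⁻¹ • (μbk - μsk), sk1) = winf ∧
        ∀ d d' : EuclideanSpace ℝ (Fin m), ∀ s s' : EuclideanSpace ℝ (Fin p),
          ‖d‖ < qB → ‖d'‖ < qB → ‖s - sk‖ < rB → ‖s' - sk‖ < rB →
          Real.sqrt (‖(w (d, s)).1 - (w (d', s')).1‖ ^ 2 +
              ‖(w (d, s)).2 - (w (d', s')).2‖ ^ 2)
            ≤ lB * lG * Real.sqrt (‖d - d'‖ ^ 2 + ‖s - s'‖ ^ 2))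
    (h2 : ‖μsk1 - μsk‖ ≤ lA * lF * ‖sk1 - sk‖)
    (hs : ‖sk1 - sk‖ < min rB (qB * ρ / (lA * lF)))
    (hw : Real.sqrt (‖zbk - zsk‖ ^ 2 + ‖μbk - μsk‖ ^ 2) < qB * ρ) :
    Real.sqrt (‖winf.1 - wsk1.1‖ ^ 2 + ‖winf.2 - wsk1.2‖ ^ 2)
      ≤ (lB * lG / ρ) *
          (Real.sqrt (‖zbk - zsk‖ ^ 2 + ‖μbk - μsk‖ ^ 2) + lA * lF * ‖sk1 - sk‖) := by
  obtain ⟨w, rfl, rfl, hlip⟩ := h1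
  have hμbk := Real.le_sqrt_sq_add_sq_right ‖zbk - zsk‖ ‖μbk - μsk‖
  have hμsk1 : ‖μsk1 - μsk‖ < qB * ρ :=
    h2.trans_lt ((lt_div_iff₀' (by positivity)).1 (hs.trans_le (min_le_right _ _)))
  have hsk1 : ‖sk1 - sk‖ < rB := hs.trans_le (min_le_left _ _)
  calc _ ≤ lB * lG * √(‖ρ⁻¹ • (μbk - μsk) - ρ⁻¹ • (μsk1 - μsk)‖ ^ 2 + ‖sk1 - sk1‖ ^ 2) :=
        hlip _ _ _ _ (norm_inv_smul_lt_of_lt_mul hρ (hμbk.trans_lt hw))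
          (norm_inv_smul_lt_of_lt_mul hρ hμsk1) hsk1 hsk1
    _ = lB * lG / ρ * ‖μbk - μsk1‖ := by
        rw [sub_self, norm_zero, norm_inv_smul_sub_sub_inv_smul_sub, abs_of_pos hρ,
          zero_pow two_ne_zero, add_zero, Real.sqrt_sq (by positivity)]
        ring
    _ ≤ lB * lG / ρ * (‖μbk - μsk‖ + ‖μsk1 - μsk‖) := by
        gcongr
        exact norm_sub_rev μsk1 μsk ▸ norm_sub_le_norm_sub_add_norm_sub μbk μsk μsk1
    _ ≤ _ := by gcongr

theorem bound_winf_to_wstar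
    (n m p : ℕ) (hn : 0 < n) (hm : 0 < m) (hp : 0 < p)
    (zbk zsk : EuclideanSpace ℝ (Fin n))
    (μbk μsk μsk1 : EuclideanSpace ℝ (Fin m))
    (sk sk1 : EuclideanSpace ℝ (Fin p))
    (winf wsk1 : EuclideanSpace ℝ (Fin n) × EuclideanSpace ℝ (Fin m))
    (ρ lA lF lB lG qB rB : ℝ)
    (hρ : 0 < ρ) (hlA : 0 < lA) (hlF : 0 < lF) (hlB : 0 < lB) (hlG : 0 < lG)
    (hqB : 0 < qB) (hrB : 0 < rB)
    (h1 : ∃ w : EuclideanSpace ℝ (Fin m) × EuclideanSpace ℝ (Fin p) →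
            EuclideanSpace ℝ (Fin n) × EuclideanSpace ℝ (Fin m),
        w (ρ⁻¹ • (μsk1 - μsk), sk1) = wsk1 ∧
        w (ρ⁻¹ • (μbk - μsk), sk1) = winf ∧
        ∀ d d' : EuclideanSpace ℝ (Fin m), ∀ s s' : EuclideanSpace ℝ (Fin p),
          ‖d‖ < qB → ‖d'‖ < qB → ‖s - sk‖ < rB → ‖s' - sk‖ < rB →
          Real.sqrt (‖(w (d, s)).1 - (w (d', s')).1‖ ^ 2 +
              ‖(w (d, s)).2 - (w (d', s')).2‖ ^ 2)
            ≤ lB * lG * Real.sqrt (‖d - d'‖ ^ 2 + ‖s - s'‖ ^ 2))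
    (h2 : ‖μsk1 - μsk‖ ≤ lA * lF * ‖sk1 - sk‖)
    (hs : ‖sk1 - sk‖ < min rB (qB * ρ / (lA * lF)))
    (hw : Real.sqrt (‖zbk - zsk‖ ^ 2 + ‖μbk - μsk‖ ^ 2) < qB * ρ) :
    Real.sqrt (‖winf.1 - wsk1.1‖ ^ 2 + ‖winf.2 - wsk1.2‖ ^ 2)
      ≤ (lB * lG / ρ) *
          (Real.sqrt (‖zbk - zsk‖ ^ 2 + ‖μbk - μsk‖ ^ 2) + lA * lF * ‖sk1 - sk‖) :=
  bound_winf_to_wstar_general n m p zbk zsk μbk μsk μsk1 sk sk1 winf wsk1 ρ lA lF lB lG qB rB hρ hlA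
    hlF hlB hlG h1 h2 hs hw
end

section
/- Let n, m, p be positive integers, all norms Euclidean. Let z̄ₖ, z̄ₖ₊₁, z*ₖ, z∞ ∈ ℝⁿ, μ̄ₖ, μ*ₖ ∈ ℝᵐ, sₖ, sₖ₊₁ ∈ ℝᵖ, g : ℝⁿ → ℝᵐ, and let ρ, C, λ_g, λ_B, λ_G, q_B, r_B, δ be positive reals, M ≥ 1 a real, θ̂ ∈ (1/2, 1). Set w̄ₖ := (z̄ₖ, μ̄ₖ), w*ₖ := (z*ₖ, μ*ₖ), w∞ := (z∞, μ̄ₖ + ρ·g(z∞)), w̄ₖ₊₁ := (z̄ₖ₊₁, μ̄ₖ + ρ·g(z̄ₖ₊₁)), d̄ := (μ̄ₖ − μ*ₖ)/ρ. Assume: (h1) there exists a map w* : ℝᵐ × ℝᵖ → ℝⁿ × ℝᵐ with w*(0, sₖ) = w*ₖ and w*(d̄, sₖ₊₁) = w∞, and ‖w*(d, s) − w*(d′, s′)‖ ≤ λ_B·λ_G·√(‖d − d′‖² + ‖s − s′‖²) for all d, d′ with ‖d‖ < q_B, ‖d′‖ < q_B and all s, s′ with ‖s − sₖ‖ < r_B,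 ‖s′ − sₖ‖ < r_B; (h3) if ‖z̄ₖ − z∞‖ < δ then ‖z̄ₖ₊₁ − z∞‖ ≤ C·M^(−ψ(θ̂))·‖z̄ₖ − z∞‖; (h4) ‖g(z̄ₖ₊₁) − g(z∞)‖ ≤ λ_g·‖z̄ₖ₊₁ − z∞‖. If ‖sₖ₊₁ − sₖ‖ < r_B, ‖w̄ₖ − w*ₖ‖ < q_B·ρ, and (1 + λ_G·λ_B/ρ)·q_B·ρ + λ_G·λ_B·r_B < δ, then ‖w̄ₖ₊₁ − w∞‖ ≤ C·(1 + ρ·λ_g)·M^(−ψ(θ̂))·( λ_B·λ_G·‖sₖ₊₁ − sₖ‖ + (1 + λ_B·λ_G/ρ)·‖w̄ₖ − w*ₖ‖ ). -/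
/-!
The limit point `w∞` is the value of the Lipschitz solution map at the perturbed data
`(d̄, sₖ₊₁)`, while `w*ₖ` is its value at `(0, sₖ)`; hence `z̄ₖ` lies within
`R := λ_B λ_G ‖sₖ₊₁ - sₖ‖ + (1 + λ_B λ_G / ρ) ‖w̄ₖ - w*ₖ‖ < δ` of `z∞`. Inside this ball the
inner loop contracts the primal error by `C M^(-ψ(θ̂))`, and the dual update
`μ̄ₖ + ρ g(·)` inflates it by at most the factor `1 + ρ λ_g`.
-/

theorem Real.le_sqrt_sq_add_sq_left (a b : ℝ) : a ≤ √(a ^ 2 + b ^ 2) :=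
  Real.le_sqrt_of_sq_le (le_add_of_nonneg_right (sq_nonneg b))

theorem Real.le_sqrt_sq_add_sq_right_s2 (a b : ℝ) : b ≤ √(a ^ 2 + b ^ 2) :=
  Real.le_sqrt_of_sq_le (le_add_of_nonneg_left (sq_nonneg a))

theorem Real.sqrt_sq_add_sq_le_add {a b : ℝ} (ha : 0 ≤ a) (hb : 0 ≤ b) :
    √(a ^ 2 + b ^ 2) ≤ a + b :=
  Real.sqrt_le_iff.mpr ⟨add_nonneg ha hb, by nlinarith⟩

section SolutionMap

variable {S E Y : Type*} [NormedAddCommGroup S] [NormedAddCommGroup E] [NormedAddCommGroup Y]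

theorem norm_fst_sub_fst_le_of_lipschitz {D : Type*} [NormedAddCommGroup D]
    (w : D × S → E × Y) {s s' : S} {d : D} {q r L : ℝ} (hL : 0 ≤ L)
    (hLip : ∀ d₁ d₂ : D, ∀ s₁ s₂ : S, ‖d₁‖ < q → ‖d₂‖ < q → ‖s₁ - s‖ < r → ‖s₂ - s‖ < r →
      √(‖(w (d₁, s₁)).1 - (w (d₂, s₂)).1‖ ^ 2 + ‖(w (d₁, s₁)).2 - (w (d₂, s₂)).2‖ ^ 2)
        ≤ L * √(‖d₁ - d₂‖ ^ 2 + ‖s₁ - s₂‖ ^ 2))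
    (hd : ‖d‖ < q) (hs : ‖s' - s‖ < r) :
    ‖(w (d, s')).1 - (w (0, s)).1‖ ≤ L * (‖d‖ + ‖s' - s‖) := by
  have h0 : ‖(0 : D)‖ < q := by simpa using (norm_nonneg d).trans_lt hd
  have hss : ‖s - s‖ < r := by simpa using (norm_nonneg _).trans_lt hs
  calc ‖(w (d, s')).1 - (w (0, s)).1‖
      ≤ √(‖(w (d, s')).1 - (w (0, s)).1‖ ^ 2 + ‖(w (d, s')).2 - (w (0, s)).2‖ ^ 2) :=
        Real.le_sqrt_sq_add_sq_left _ _
    _ ≤ L * √(‖d - 0‖ ^ 2 + ‖s' - s‖ ^ 2) := hLip d 0 s' s hd h0 hs hss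
    _ ≤ L * (‖d‖ + ‖s' - s‖) := by
        rw [sub_zero]
        exact mul_le_mul_of_nonneg_left
          (Real.sqrt_sq_add_sq_le_add (norm_nonneg _) (norm_nonneg _)) hL

theorem norm_sub_limit_le_of_lipschitz {F : Type*} [NormedAddCommGroup F] [NormedSpace ℝ F]
    (w : F × S → E × Y) {s s' : S} {z zs zinf : E} {μ μs : F} {ρ q r L : ℝ}
    (hρ : 0 < ρ) (hL : 0 ≤ L)
    (hw0 : (w (0, s)).1 = zs) (hwinf : (w (ρ⁻¹ • (μ - μs), s')).1 = zinf)
    (hLip : ∀ d₁ d₂ : F, ∀ s₁ s₂ : S, ‖d₁‖ < q → ‖d₂‖ < q → ‖s₁ - s‖ < r → ‖s₂ - s‖ < r →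
      √(‖(w (d₁, s₁)).1 - (w (d₂, s₂)).1‖ ^ 2 + ‖(w (d₁, s₁)).2 - (w (d₂, s₂)).2‖ ^ 2)
        ≤ L * √(‖d₁ - d₂‖ ^ 2 + ‖s₁ - s₂‖ ^ 2))
    (hs : ‖s' - s‖ < r) (hw : √(‖z - zs‖ ^ 2 + ‖μ - μs‖ ^ 2) < q * ρ) :
    ‖z - zinf‖ ≤ L * ‖s' - s‖ + (1 + L / ρ) * √(‖z - zs‖ ^ 2 + ‖μ - μs‖ ^ 2) := by
  set W := √(‖z - zs‖ ^ 2 + ‖μ - μs‖ ^ 2)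
  have hμ : ‖μ - μs‖ ≤ W := Real.le_sqrt_sq_add_sq_right_s2 _ _
  have hd : ‖ρ⁻¹ • (μ - μs)‖ = ‖μ - μs‖ / ρ := by
    rw [norm_smul, Real.norm_of_nonneg (inv_nonneg.mpr hρ.le), inv_mul_eq_div]
  have hdq : ‖ρ⁻¹ • (μ - μs)‖ < q := by
    rw [hd, div_lt_iff₀ hρ]
    exact hμ.trans_lt hw
  have hlim := norm_fst_sub_fst_le_of_lipschitz w hL hLip hdq hs
  rw [hw0, hwinf, hd, norm_sub_rev] at hlim
  calc ‖z - zinf‖ ≤ ‖z - zs‖ + ‖zs - zinf‖ := norm_sub_le_norm_sub_add_norm_sub z zs zinf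
    _ ≤ W + L * (W / ρ + ‖s' - s‖) := by
        gcongr
        · exact Real.le_sqrt_sq_add_sq_left _ _
        · exact hlim.trans (by gcongr)
    _ = L * ‖s' - s‖ + (1 + L / ρ) * W := by ring

end SolutionMap

theorem sqrt_sq_norm_add_sq_norm_dual_update_le {E F : Type*} [NormedAddCommGroup E]
    [NormedAddCommGroup F] [NormedSpace ℝ F] (g : E → F) {x y : E} (μ : F) {ρ l : ℝ}
    (hρ : 0 ≤ ρ) (hg : ‖g x - g y‖ ≤ l * ‖x - y‖) :
    √(‖x - y‖ ^ 2 + ‖(μ + ρ • g x) - (μ + ρ • g y)‖ ^ 2) ≤ (1 + ρ * l) * ‖x - y‖ := by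
  rw [add_sub_add_left_eq_sub, ← smul_sub, norm_smul, Real.norm_of_nonneg hρ]
  calc √(‖x - y‖ ^ 2 + (ρ * ‖g x - g y‖) ^ 2) ≤ ‖x - y‖ + ρ * ‖g x - g y‖ :=
        Real.sqrt_sq_add_sq_le_add (norm_nonneg _) (by positivity)
    _ ≤ ‖x - y‖ + ρ * (l * ‖x - y‖) := by gcongr
    _ = (1 + ρ * l) * ‖x - y‖ := by ring

theorem bound_truncation_error_general
    (n m p : ℕ)
    (zbk zbk1 zsk zinf : EuclideanSpace ℝ (Fin n))
    (μbk μsk : EuclideanSpace ℝ (Fin m))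
    (sk sk1 : EuclideanSpace ℝ (Fin p))
    (g : EuclideanSpace ℝ (Fin n) → EuclideanSpace ℝ (Fin m))
    (ρ C lg lB lG qB rB δ M θhat : ℝ)
    (hρ : 0 < ρ) (hC : 0 < C) (hlg : 0 < lg) (hlB : 0 < lB) (hlG : 0 < lG)
    (hM : 1 ≤ M)
    (h1 : ∃ w : EuclideanSpace ℝ (Fin m) × EuclideanSpace ℝ (Fin p) →
            EuclideanSpace ℝ (Fin n) × EuclideanSpace ℝ (Fin m),
        w (0, sk) = (zsk, μsk) ∧
        w (ρ⁻¹ • (μbk - μsk), sk1) = (zinf, μbk + ρ • g zinf) ∧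
        ∀ d d' : EuclideanSpace ℝ (Fin m), ∀ s s' : EuclideanSpace ℝ (Fin p),
          ‖d‖ < qB → ‖d'‖ < qB → ‖s - sk‖ < rB → ‖s' - sk‖ < rB →
          Real.sqrt (‖(w (d, s)).1 - (w (d', s')).1‖ ^ 2 +
              ‖(w (d, s)).2 - (w (d', s')).2‖ ^ 2)
            ≤ lB * lG * Real.sqrt (‖d - d'‖ ^ 2 + ‖s - s'‖ ^ 2))
    (h3 : ‖zbk - zinf‖ < δ →
        ‖zbk1 - zinf‖ ≤ C * M ^ (-((1 - θhat) / (2 * θhat - 1))) * ‖zbk - zinf‖)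
    (h4 : ‖g zbk1 - g zinf‖ ≤ lg * ‖zbk1 - zinf‖)
    (hs : ‖sk1 - sk‖ < rB)
    (hw : Real.sqrt (‖zbk - zsk‖ ^ 2 + ‖μbk - μsk‖ ^ 2) < qB * ρ)
    (hδball : (1 + lG * lB / ρ) * (qB * ρ) + lG * lB * rB < δ) :
    Real.sqrt (‖zbk1 - zinf‖ ^ 2 +
        ‖(μbk + ρ • g zbk1) - (μbk + ρ • g zinf)‖ ^ 2)
      ≤ C * (1 + ρ * lg) * M ^ (-((1 - θhat) / (2 * θhat - 1))) *
          (lB * lG * ‖sk1 - sk‖ +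
            (1 + lB * lG / ρ) * Real.sqrt (‖zbk - zsk‖ ^ 2 + ‖μbk - μsk‖ ^ 2)) := by
  obtain ⟨w, hw0, hwinf, hLip⟩ := h1
  set W := Real.sqrt (‖zbk - zsk‖ ^ 2 + ‖μbk - μsk‖ ^ 2)
  set rate := M ^ (-((1 - θhat) / (2 * θhat - 1)))
  have hL : 0 < lB * lG := mul_pos hlB hlG
  have hR : ‖zbk - zinf‖ ≤ lB * lG * ‖sk1 - sk‖ + (1 + lB * lG / ρ) * W :=
    norm_sub_limit_le_of_lipschitz w hρ hL.le (by rw [hw0]) (by rw [hwinf]) hLip hs hw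
  have hRδ : lB * lG * ‖sk1 - sk‖ + (1 + lB * lG / ρ) * W < δ := by
    rw [mul_comm lB lG] at hL ⊢
    calc _ < lG * lB * rB + (1 + lG * lB / ρ) * (qB * ρ) := by gcongr
      _ < δ := by linarith
  have hrate : 0 ≤ rate := Real.rpow_nonneg (by linarith) _
  calc _ ≤ (1 + ρ * lg) * ‖zbk1 - zinf‖ := sqrt_sq_norm_add_sq_norm_dual_update_le g μbk hρ.le h4
    _ ≤ (1 + ρ * lg) * (C * rate * ‖zbk - zinf‖) := by gcongr; exact h3 (hR.trans_lt hRδ)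
    _ ≤ (1 + ρ * lg) * (C * rate * (lB * lG * ‖sk1 - sk‖ + (1 + lB * lG / ρ) * W)) := by gcongr
    _ = _ := by ring

theorem bound_truncation_error
    (n m p : ℕ) (hn : 0 < n) (hm : 0 < m) (hp : 0 < p)
    (zbk zbk1 zsk zinf : EuclideanSpace ℝ (Fin n))
    (μbk μsk : EuclideanSpace ℝ (Fin m))
    (sk sk1 : EuclideanSpace ℝ (Fin p))
    (g : EuclideanSpace ℝ (Fin n) → EuclideanSpace ℝ (Fin m))
    (ρ C lg lB lG qB rB δ M θhat : ℝ)
    (hρ : 0 < ρ) (hC : 0 < C) (hlg : 0 < lg) (hlB : 0 < lB) (hlG : 0 < lG)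
    (hqB : 0 < qB) (hrB : 0 < rB) (hδ : 0 < δ)
    (hM : 1 ≤ M) (hθ1 : 1 / 2 < θhat) (hθ2 : θhat < 1)
    (h1 : ∃ w : EuclideanSpace ℝ (Fin m) × EuclideanSpace ℝ (Fin p) →
            EuclideanSpace ℝ (Fin n) × EuclideanSpace ℝ (Fin m),
        w (0, sk) = (zsk, μsk) ∧
        w (ρ⁻¹ • (μbk - μsk), sk1) = (zinf, μbk + ρ • g zinf) ∧
        ∀ d d' : EuclideanSpace ℝ (Fin m), ∀ s s' : EuclideanSpace ℝ (Fin p),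
          ‖d‖ < qB → ‖d'‖ < qB → ‖s - sk‖ < rB → ‖s' - sk‖ < rB →
          Real.sqrt (‖(w (d, s)).1 - (w (d', s')).1‖ ^ 2 +
              ‖(w (d, s)).2 - (w (d', s')).2‖ ^ 2)
            ≤ lB * lG * Real.sqrt (‖d - d'‖ ^ 2 + ‖s - s'‖ ^ 2))
    (h3 : ‖zbk - zinf‖ < δ →
        ‖zbk1 - zinf‖ ≤ C * M ^ (-((1 - θhat) / (2 * θhat - 1))) * ‖zbk - zinf‖)
    (h4 : ‖g zbk1 - g zinf‖ ≤ lg * ‖zbk1 - zinf‖)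
    (hs : ‖sk1 - sk‖ < rB)
    (hw : Real.sqrt (‖zbk - zsk‖ ^ 2 + ‖μbk - μsk‖ ^ 2) < qB * ρ)
    (hδball : (1 + lG * lB / ρ) * (qB * ρ) + lG * lB * rB < δ) :
    Real.sqrt (‖zbk1 - zinf‖ ^ 2 +
        ‖(μbk + ρ • g zbk1) - (μbk + ρ • g zinf)‖ ^ 2)
      ≤ C * (1 + ρ * lg) * M ^ (-((1 - θhat) / (2 * θhat - 1))) *
          (lB * lG * ‖sk1 - sk‖ +
            (1 + lB * lG / ρ) * Real.sqrt (‖zbk - zsk‖ ^ 2 + ‖μbk - μsk‖ ^ 2)) :=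
  bound_truncation_error_general n m p zbk zbk1 zsk zinf μbk μsk sk sk1 g ρ C lg lB lG qB rB δ M
    θhat hρ hC hlg hlB hlG hM h1 h3 h4 hs hw hδball
end

section
/- Let n, m, p be positive integers and let all norms be Euclidean. Let u ∈ ℝⁿ, v, Δd ∈ ℝᵐ, Δs ∈ ℝᵖ and λ_F > 0. If √(‖u‖² + ‖v‖²) ≤ λ_F·‖Δs‖, then √(‖u‖² + ‖v + Δd‖²) ≤ √(max{λ_F², 1} + λ_F) · √(‖Δd‖² + ‖Δs‖²). -/
/-!
The constant comes from expanding `‖v + Δd‖² ≤ (‖v‖ + ‖Δd‖)²`: the hypothesis bounds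
`‖u‖² + ‖v‖²` by `λ_F² ‖Δs‖²` and the cross term `2‖v‖‖Δd‖` by `2 λ_F ‖Δs‖ ‖Δd‖ ≤ λ_F (‖Δs‖² + ‖Δd‖²)`,
while `max {λ_F², 1}` absorbs both `λ_F² ‖Δs‖²` and `‖Δd‖²`.
-/

theorem norm_sq_add_norm_add_sq_le {E F G : Type*} [SeminormedAddCommGroup E]
    [SeminormedAddCommGroup F] [SeminormedAddCommGroup G] (u : E) (v d : F) (s : G) {L : ℝ}
    (hL : 0 ≤ L) (h : ‖u‖ ^ 2 + ‖v‖ ^ 2 ≤ (L * ‖s‖) ^ 2) :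
    ‖u‖ ^ 2 + ‖v + d‖ ^ 2 ≤ (max (L ^ 2) 1 + L) * (‖d‖ ^ 2 + ‖s‖ ^ 2) := by
  have hv : ‖v‖ ≤ L * ‖s‖ :=
    (pow_le_pow_iff_left₀ (norm_nonneg v) (by positivity) two_ne_zero).mp
      (by linarith [sq_nonneg ‖u‖])
  calc ‖u‖ ^ 2 + ‖v + d‖ ^ 2
      ≤ ‖u‖ ^ 2 + (‖v‖ + ‖d‖) ^ 2 := by gcongr; exact norm_add_le v d
    _ = (‖u‖ ^ 2 + ‖v‖ ^ 2) + 2 * ‖v‖ * ‖d‖ + 1 * ‖d‖ ^ 2 := by ring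
    _ ≤ (L * ‖s‖) ^ 2 + 2 * (L * ‖s‖) * ‖d‖ + 1 * ‖d‖ ^ 2 := by gcongr
    _ = L ^ 2 * ‖s‖ ^ 2 + L * (2 * ‖s‖ * ‖d‖) + 1 * ‖d‖ ^ 2 := by ring
    _ ≤ max (L ^ 2) 1 * ‖s‖ ^ 2 + L * (‖s‖ ^ 2 + ‖d‖ ^ 2) + max (L ^ 2) 1 * ‖d‖ ^ 2 := by
        gcongr
        · exact le_max_left _ _
        · exact two_mul_le_add_sq _ _
        · exact le_max_right _ _
    _ = (max (L ^ 2) 1 + L) * (‖d‖ ^ 2 + ‖s‖ ^ 2) := by ring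

theorem lipschitz_constant_G_general
    (n m p : ℕ)
    (u : EuclideanSpace ℝ (Fin n))
    (v Δd : EuclideanSpace ℝ (Fin m))
    (Δs : EuclideanSpace ℝ (Fin p))
    (lF : ℝ) (hlF : 0 < lF)
    (h : Real.sqrt (‖u‖ ^ 2 + ‖v‖ ^ 2) ≤ lF * ‖Δs‖) :
    Real.sqrt (‖u‖ ^ 2 + ‖v + Δd‖ ^ 2)
      ≤ Real.sqrt (max (lF ^ 2) 1 + lF) * Real.sqrt (‖Δd‖ ^ 2 + ‖Δs‖ ^ 2) := by
  have hsq : ‖u‖ ^ 2 + ‖v‖ ^ 2 ≤ (lF * ‖Δs‖) ^ 2 := (Real.sqrt_le_iff.mp h).2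
  calc Real.sqrt (‖u‖ ^ 2 + ‖v + Δd‖ ^ 2)
      ≤ Real.sqrt ((max (lF ^ 2) 1 + lF) * (‖Δd‖ ^ 2 + ‖Δs‖ ^ 2)) :=
        Real.sqrt_le_sqrt (norm_sq_add_norm_add_sq_le u v Δd Δs hlF.le hsq)
    _ = Real.sqrt (max (lF ^ 2) 1 + lF) * Real.sqrt (‖Δd‖ ^ 2 + ‖Δs‖ ^ 2) :=
        Real.sqrt_mul (by positivity) _

theorem lipschitz_constant_G
    (n m p : ℕ) (hn : 0 < n) (hm : 0 < m) (hp : 0 < p)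
    (u : EuclideanSpace ℝ (Fin n))
    (v Δd : EuclideanSpace ℝ (Fin m))
    (Δs : EuclideanSpace ℝ (Fin p))
    (lF : ℝ) (hlF : 0 < lF)
    (h : Real.sqrt (‖u‖ ^ 2 + ‖v‖ ^ 2) ≤ lF * ‖Δs‖) :
    Real.sqrt (‖u‖ ^ 2 + ‖v + Δd‖ ^ 2)
      ≤ Real.sqrt (max (lF ^ 2) 1 + lF) * Real.sqrt (‖Δd‖ ^ 2 + ‖Δs‖ ^ 2) :=
  lipschitz_constant_G_general n m p u v Δd Δs lF hlF h
end
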